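/- arXiv:1210.6930 — 3 statements merged into one kernel-verified Lean document; each statement's English description precedes it below -/
import Mathlib

section
/- Let K ⊆ ℝ^n be compact, A ⊆ ℕ^n finite with ℝ[x]_A being K-full, and d > deg(A). Then the set E_d(y,K) = { z ∈ ℝ^{ℕ^n_d} : z admits a representing measure supported in K and z_α = y_α for all α ∈ A } is a compact convex subset of ℝ^{ℕ^n_d}. -/
/-!
If `p` is supported on `A` and positive on `K`, with `ε = min_K p > 0`, then every representing
measure `μ` of a point of `E_d(y,K)` has mass at most `M = (∑_{α ∈ A} p_α y_α) / ε`, since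
`ε μ(ℝⁿ) ≤ ∫ p dμ = ∑ p_α y_α`. The moment vectors of the finite measures on `K` of mass at most `M`
all lie in the convex hull of the compact set `{0} ∪ [0, M] · v(K)`, where `v` is the vector of
monomials of degree `≤ d` (Jensen), and conversely every point of that hull is the moment vector
of a finite combination of Dirac masses on `K`. So `E_d(y,K)` is the intersection of a linear
image of a compact convex set (Carathéodory) with an affine subspace.
-/

open MeasureTheory

/-- The extension set `E_d(y,K)`: truncated moment sequences of degree `d`
(padded by zero in degrees `> d`) that admit a representing measure supported
in `K` and agree with `y` on `A`. -/
def extensionSet (n d : ℕ) (A : Finset (Fin n → ℕ)) (K : Set (Fin n → ℝ))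
    (y : (Fin n → ℕ) → ℝ) : Set ((Fin n → ℕ) → ℝ) :=
  {z | (∃ μ : Measure (Fin n → ℝ), μ Kᶜ = 0 ∧
          ∀ α : Fin n → ℕ, (∑ j, α j) ≤ d →
            Integrable (fun x => ∏ j, x j ^ α j) μ ∧
              z α = ∫ x, ∏ j, x j ^ α j ∂μ) ∧
        (∀ α ∈ A, z α = y α) ∧
        (∀ α : Fin n → ℕ, ¬ (∑ j, α j) ≤ d → z α = 0)}

open Set
open scoped Pointwise

theorem isCompact_convexHull {E : Type*} [NormedAddCommGroup E] [NormedSpace ℝ E]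
    [FiniteDimensional ℝ E] {s : Set E} (hs : IsCompact s) : IsCompact (convexHull ℝ s) := by
  obtain rfl | ⟨x₀, hx₀⟩ := s.eq_empty_or_nonempty
  · simp
  set N := Module.finrank ℝ E + 1
  suffices convexHull ℝ s = (fun p : (Fin N → ℝ) × (Fin N → E) => ∑ i, p.1 i • p.2 i) ''
      (stdSimplex ℝ (Fin N) ×ˢ univ.pi fun _ => s) by
    rw [this]
    exact ((isCompact_stdSimplex ℝ (Fin N)).prod (isCompact_univ_pi fun _ => hs)).image
      (by fun_prop)
  refine Subset.antisymm (fun x hx => ?_) ?_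
  · obtain ⟨ι, _, z, w, hzs, hind, hw0, hw1, rfl⟩ := eq_pos_convex_span_of_mem_convexHull hx
    obtain ⟨e⟩ : Nonempty (ι ↪ Fin N) := Function.Embedding.nonempty_of_card_le <|
        hind.card_le_finrank_succ.trans <|
        (Nat.add_le_add_right (Submodule.finrank_le _) 1).trans_eq (Fintype.card_fin N).symm
    refine ⟨(Function.extend e w 0, Function.extend e z fun _ => x₀), ⟨⟨fun i => ?_, ?_⟩, ?_⟩, ?_⟩
    · obtain ⟨j, rfl⟩ | hi := em (i ∈ range e)
      · simpa [e.injective.extend_apply] using (hw0 j).le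
      · simp [Function.extend_apply' _ _ _ hi]
    · rw [← hw1]
      exact (Fintype.sum_of_injective e e.injective w (Function.extend e w 0)
        (fun i hi => Function.extend_apply' _ _ _ hi)
        fun j => (e.injective.extend_apply _ _ j).symm).symm
    · intro i _
      obtain ⟨j, rfl⟩ | hi := em (i ∈ range e)
      · simpa [e.injective.extend_apply] using hzs (mem_range_self j)
      · simpa [Function.extend_apply' _ _ _ hi] using hx₀
    · exact (Fintype.sum_of_injective e e.injective _ _
        (fun i hi => by simp [Function.extend_apply' _ _ _ hi])
        fun j => by simp [e.injective.extend_apply]).symm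
  · rintro _ ⟨⟨w, z⟩, ⟨hw, hz⟩, rfl⟩
    exact mem_convexHull_of_exists_fintype w z hw.1 hw.2 (fun i => hz i trivial) rfl

section MomentCone

variable {X E : Type*} [MeasurableSpace X] [NormedAddCommGroup E] [NormedSpace ℝ E]

theorem mul_measureReal_univ_le_integral {μ : Measure X} [IsFiniteMeasure μ] {K : Set X}
    {f : X → ℝ} {ε : ℝ} (hμK : μ Kᶜ = 0) (hf : Integrable f μ) (hε : ∀ x ∈ K, ε ≤ f x) :
    ε * μ.real univ ≤ ∫ x, f x ∂μ :=
  calc ε * μ.real univ = ∫ _, ε ∂μ := by simp [mul_comm]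
    _ ≤ ∫ x, f x ∂μ :=
      integral_mono_ae (integrable_const ε) hf (Filter.mem_of_superset (mem_ae_iff.2 hμK) hε)

theorem integral_mem_convexHull_cone [TopologicalSpace X] [CompleteSpace E]
    [FiniteDimensional ℝ E] {μ : Measure X} [IsFiniteMeasure μ] {K : Set X} (hK : IsCompact K)
    {v : X → E} (hv : ContinuousOn v K) (hvμ : Integrable v μ) (hμK : μ Kᶜ = 0) {M : ℝ}
    (hM : μ.real univ ≤ M) :
    ∫ x, v x ∂μ ∈ convexHull ℝ (insert 0 (Icc 0 M • v '' K)) := by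
  rcases eq_zero_or_neZero μ with rfl | _
  · simpa using subset_convexHull ℝ _ (mem_insert _ _)
  have havg : ⨍ x, v x ∂μ ∈ convexHull ℝ (v '' K) :=
    (convex_convexHull ℝ _).average_mem
      (isCompact_convexHull (hK.image_of_continuousOn hv)).isClosed
      (Filter.mem_of_superset (mem_ae_iff.2 hμK) fun x hx =>
        subset_convexHull ℝ _ (mem_image_of_mem v hx)) hvμ
  rw [← measure_smul_average]
  refine convexHull_mono ?_ (convexHull_smul (μ.real univ) (v '' K) ▸ smul_mem_smul_set havg)
  exact (smul_set_subset_smul (s := Icc 0 M) ⟨measureReal_nonneg, hM⟩).trans (subset_insert _ _)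

def momentCone (v : X → E) (K : Set X) : Set E :=
  {w | ∃ μ : Measure X, IsFiniteMeasure μ ∧ μ Kᶜ = 0 ∧ Integrable v μ ∧ ∫ x, v x ∂μ = w}

theorem convex_momentCone (v : X → E) (K : Set X) : Convex ℝ (momentCone v K) := by
  rintro _ ⟨μ, _, hμK, hvμ, rfl⟩ _ ⟨ν, _, hνK, hvν, rfl⟩ a b ha hb -
  refine ⟨a.toNNReal • μ + b.toNNReal • ν, inferInstance, by simp [hμK, hνK],
    hvμ.smul_measure_nnreal.add_measure hvν.smul_measure_nnreal, ?_⟩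
  rw [integral_add_measure hvμ.smul_measure_nnreal hvν.smul_measure_nnreal,
    integral_smul_nnreal_measure, integral_smul_nnreal_measure]
  simp [NNReal.smul_def, ha, hb]

theorem convexHull_cone_subset_momentCone [CompleteSpace E] [MeasurableSingletonClass X]
    (v : X → E) (K : Set X) (M : ℝ) :
    convexHull ℝ (insert 0 (Icc 0 M • v '' K)) ⊆ momentCone v K := by
  refine convexHull_min (insert_subset_iff.2 ⟨⟨0, inferInstance, by simp, by simp, by simp⟩, ?_⟩)
    (convex_momentCone v K)
  rintro _ ⟨t, ⟨ht, -⟩, _, ⟨x, hx, rfl⟩, rfl⟩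
  have hv : Integrable v (Measure.dirac x) := integrable_dirac enorm_lt_top
  refine ⟨t.toNNReal • Measure.dirac x, inferInstance, by simp [hx], hv.smul_measure_nnreal, ?_⟩
  simp [integral_smul_nnreal_measure, NNReal.smul_def, ht]

end MomentCone

abbrev MultiIndex (n d : ℕ) := {α : Fin n → ℕ // ∑ j, α j ≤ d}

instance (n d : ℕ) : Finite (MultiIndex n d) :=
  Set.Finite.to_subtype <| (Set.finite_Iic fun _ => d).subset fun _ hα j =>
    (Finset.single_le_sum (fun _ _ => Nat.zero_le _) (Finset.mem_univ j)).trans hα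

noncomputable instance (n d : ℕ) : Fintype (MultiIndex n d) := Fintype.ofFinite _

def monomialVector (n d : ℕ) (x : Fin n → ℝ) : MultiIndex n d → ℝ :=
  fun α => ∏ j, x j ^ α.1 j

def padZero (n d : ℕ) : (MultiIndex n d → ℝ) →ₗ[ℝ] (Fin n → ℕ) → ℝ :=
  LinearMap.pi fun α => if h : ∑ j, α j ≤ d then LinearMap.proj ⟨α, h⟩ else 0

theorem continuous_monomialVector (n d : ℕ) : Continuous (monomialVector n d) := by
  unfold monomialVector
  fun_prop

theorem padZero_apply_of_le {n d : ℕ} {α : Fin n → ℕ} (h : ∑ j, α j ≤ d)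
    (w : MultiIndex n d → ℝ) : padZero n d w α = w ⟨α, h⟩ := by
  simp [padZero, h]

theorem padZero_apply_of_not_le {n d : ℕ} {α : Fin n → ℕ} (h : ¬∑ j, α j ≤ d)
    (w : MultiIndex n d → ℝ) : padZero n d w α = 0 := by
  simp [padZero, h]

theorem extensionSet_eq_image_convexHull_inter {n d : ℕ} {A : Finset (Fin n → ℕ)}
    {K : Set (Fin n → ℝ)} (hK : IsCompact K) (hA : ∀ α ∈ A, ∑ j, α j ≤ d)
    {p : (Fin n → ℕ) → ℝ} {ε : ℝ} (hε0 : 0 < ε)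
    (hε : ∀ x ∈ K, ε ≤ ∑ α ∈ A, p α * ∏ j, x j ^ α j) (y : (Fin n → ℕ) → ℝ) :
    extensionSet n d A K y = padZero n d '' convexHull ℝ
        (insert 0 (Icc 0 ((∑ α ∈ A, p α * y α) / ε) • monomialVector n d '' K)) ∩
      {z | ∀ α ∈ A, z α = y α} := by
  ext z
  constructor
  · rintro ⟨⟨μ, hμK, hμ⟩, hzy, hz0⟩
    have : IsFiniteMeasure μ :=
      (integrable_const_iff.1 (by simpa using (hμ 0 (by simp)).1)).resolve_left one_ne_zero
    have hv : Integrable (monomialVector n d) μ := Integrable.of_eval fun α => (hμ α.1 α.2).1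
    have hterm (α) (hα : α ∈ A) : Integrable (fun x => p α * ∏ j, x j ^ α j) μ :=
      (hμ α (hA α hα)).1.const_mul _
    have hmass : ε * μ.real univ ≤ ∑ α ∈ A, p α * y α :=
      calc ε * μ.real univ ≤ ∫ x, ∑ α ∈ A, p α * ∏ j, x j ^ α j ∂μ :=
            mul_measureReal_univ_le_integral hμK (integrable_finsetSum _ hterm) hε
        _ = ∑ α ∈ A, p α * y α := by
          rw [integral_finsetSum _ hterm]
          refine Finset.sum_congr rfl fun α hα => ?_
          rw [integral_const_mul, ← (hμ α (hA α hα)).2, hzy α hα]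
    refine ⟨⟨_, integral_mem_convexHull_cone hK (continuous_monomialVector n d).continuousOn hv
      hμK ((le_div_iff₀' hε0).2 hmass), ?_⟩, hzy⟩
    ext α
    by_cases h : ∑ j, α j ≤ d
    · simp [padZero_apply_of_le h, eval_integral hv.eval, (hμ α h).2, monomialVector]
    · simp [padZero_apply_of_not_le h, hz0 α h]
  · rintro ⟨⟨w, hw, rfl⟩, hzy⟩
    obtain ⟨μ, _, hμK, hv, rfl⟩ := convexHull_cone_subset_momentCone _ _ _ hw
    refine ⟨⟨μ, hμK, fun α h => ⟨hv.eval ⟨α, h⟩, ?_⟩⟩, hzy,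
      fun α h => padZero_apply_of_not_le h _⟩
    simp [padZero_apply_of_le h, eval_integral hv.eval, monomialVector]

/-- For compact `K`, `K`-full `ℝ[x]_A`, and `d > deg(A)`,
the set `E_d(y,K)` is a compact convex set. -/
theorem extensionSet_convex_isCompact
    (n d : ℕ) (A : Finset (Fin n → ℕ)) (K : Set (Fin n → ℝ)) (hK : IsCompact K)
    (hfull : ∃ p : (Fin n → ℕ) → ℝ, ∀ x ∈ K, 0 < ∑ α ∈ A, p α * ∏ j, x j ^ α j)
    (hd : ∀ α ∈ A, (∑ j, α j) < d) (y : (Fin n → ℕ) → ℝ) :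
    Convex ℝ (extensionSet n d A K y) ∧ IsCompact (extensionSet n d A K y) := by
  obtain ⟨p, hp⟩ := hfull
  obtain ⟨ε, hε0, hε⟩ := hK.exists_forall_le' (by fun_prop) hp
  rw [extensionSet_eq_image_convexHull_inter hK (fun α hα => (hd α hα).le) hε0 hε y]
  have hcone := isCompact_convexHull <|
    ((isCompact_Icc (a := 0) (b := (∑ α ∈ A, p α * y α) / ε)).smul_set
      (hK.image (continuous_monomialVector n d))).insert 0
  have hconvex : Convex ℝ {z : (Fin n → ℕ) → ℝ | ∀ α ∈ A, z α = y α} :=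
    fun z hz z' hz' a b _ _ hab α hα => by simp [hz α hα, hz' α hα, ← add_mul, hab]
  have hclosed : IsClosed {z : (Fin n → ℕ) → ℝ | ∀ α ∈ A, z α = y α} := by
    simp only [ofPred_forall]
    exact isClosed_biInter fun α _ => isClosed_eq (continuous_apply α) continuous_const
  exact ⟨((convex_convexHull ℝ _).linear_image _).inter hconvex,
    (hcone.image (padZero n d).continuous_of_finiteDimensional).inter_right hclosed⟩
end

section
/- Let ω ∈ ℝ^{ℕ^n_{2t}} be a truncated moment sequence admitting a finitely atomic representing measure μ with |supp(μ)| ≤ N, where d_K ≥ 1 and t ≥ N·d_K. Then ω is flat: rank M_{t−d_K}(ω) = rank M_t(ω). -/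
/-! If `μ = ∑ i, c i • δ_{u i}`, the moment matrix factors as `M_s(ω) = Aᵀ A`, where row `i` of `A`
is `√(c i)` times the vector of monomials of degree `≤ s` evaluated at `u i`. Hence `rank M_s(ω)` is
the dimension of the span of these monomial vectors at the points of `supp μ`. Monomial vectors at
any `≤ s + 1` distinct points `S` are linearly independent: for `p ∈ S`, a product of `#S - 1` affine
forms, each vanishing at one other point of `S` but not at `p`, has degree `≤ s` and isolates the
coefficient of `p` in any vanishing combination.
So `rank M_s(ω) = |supp μ|` as soon as `|supp μ| ≤ s + 1`, and `N·d_K ≤ t` gives this for both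
`s = t - d_K` and `s = t`. -/

/-- The finite set of exponents `α ∈ ℕ^n` with `|α| ≤ t`. -/
noncomputable def degLE (n t : ℕ) : Finset (Fin n →₀ ℕ) :=
  ((Fintype.piFinset fun _ : Fin n => Finset.range (t + 1)).filter
    (fun f => ∑ j, f j ≤ t)).image (fun f => Finsupp.equivFunOnFinite.symm f)

/-- The `s`-th moment matrix of a multisequence `ω`, indexed by monomials of
degree `≤ s`: `(M_s(ω))_{α,β} = ω_{α+β}`. -/
noncomputable def momMat (n s : ℕ) (ω : (Fin n →₀ ℕ) → ℝ) :
    Matrix (degLE n s) (degLE n s) ℝ :=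
  Matrix.of fun a b => ω (a.1 + b.1)

open Finset MvPolynomial
open scoped Matrix

lemma span_range_smul_eq_span_image {K M ι : Type*} [Field K] [AddCommGroup M] [Module K M]
    (a : ι → K) (f : ι → M) :
    Submodule.span K (Set.range fun i => a i • f i) = Submodule.span K (f '' {i | a i ≠ 0}) := by
  apply le_antisymm <;> rw [Submodule.span_le]
  · rintro _ ⟨i, rfl⟩
    by_cases hi : a i = 0
    · simp [hi]
    · exact Submodule.smul_mem _ _ (Submodule.subset_span ⟨i, hi, rfl⟩)
  · rintro _ ⟨i, hi, rfl⟩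
    rw [← inv_smul_smul₀ hi (f i)]
    exact Submodule.smul_mem _ _ (Submodule.subset_span ⟨i, rfl⟩)

lemma mem_degLE {n s : ℕ} {α : Fin n →₀ ℕ} : α ∈ degLE n s ↔ α.degree ≤ s := by
  simp only [degLE, mem_image, mem_filter, Fintype.mem_piFinset, mem_range, Finsupp.degree_eq_sum]
  constructor
  · rintro ⟨f, ⟨-, hf⟩, rfl⟩
    simpa using hf
  · intro h
    refine ⟨α, ⟨fun j => ?_, h⟩, Finsupp.equivFunOnFinite.symm_apply_apply α⟩
    exact Nat.lt_succ_of_le ((single_le_sum (fun _ _ => Nat.zero_le _) (mem_univ j)).trans h)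

section Field

variable {K : Type*} [Field K] {n s : ℕ}

def monomialVec (s : ℕ) (p : Fin n → K) : degLE n s → K := fun a => ∏ j, p j ^ a.1 j

lemma eval_eq_sum_coeff_mul_monomialVec {P : MvPolynomial (Fin n) K} (hP : P.totalDegree ≤ s)
    (p : Fin n → K) : eval p P = ∑ a : degLE n s, P.coeff a * monomialVec s p a := by
  have hsupp : P.support ⊆ degLE n s := fun a ha => mem_degLE.2 ((le_totalDegree ha).trans hP)
  rw [eval_eq', sum_subset hsupp fun a _ ha => by rw [notMem_support_iff.1 ha, zero_mul],
    ← sum_coe_sort]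
  rfl

lemma sum_mul_eval_eq_zero_of_sum_smul_monomialVec_eq_zero {ι : Type*} [Fintype ι]
    {x : ι → Fin n → K} {g : ι → K} (hg : ∑ i, g i • monomialVec s (x i) = 0)
    {P : MvPolynomial (Fin n) K} (hP : P.totalDegree ≤ s) : ∑ i, g i * eval (x i) P = 0 := by
  simp_rw [eval_eq_sum_coeff_mul_monomialVec hP, mul_sum]
  rw [sum_comm]
  refine sum_eq_zero fun a _ => ?_
  have hga := congrFun hg a
  simp only [Finset.sum_apply, Pi.smul_apply, smul_eq_mul, Pi.zero_apply] at hga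
  simp_rw [mul_left_comm (g _), ← mul_sum, hga, mul_zero]

lemma exists_totalDegree_le_one_eval_ne_zero_eval_eq_zero {p q : Fin n → K} (hpq : p ≠ q) :
    ∃ L : MvPolynomial (Fin n) K, L.totalDegree ≤ 1 ∧ eval p L ≠ 0 ∧ eval q L = 0 := by
  obtain ⟨j, hj⟩ := Function.ne_iff.1 hpq
  refine ⟨X j - C (q j), ?_, by simpa [sub_eq_zero] using hj, by simp⟩
  exact (totalDegree_sub _ _).trans (by simp)

lemma exists_totalDegree_le_eval_ne_zero_eval_eq_zero (S : Finset (Fin n → K)) {p : Fin n → K}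
    (hp : p ∈ S) : ∃ P : MvPolynomial (Fin n) K, P.totalDegree ≤ S.card - 1 ∧ eval p P ≠ 0 ∧
      ∀ q ∈ S, q ≠ p → eval q P = 0 := by
  classical
  have hL : ∀ q, ∃ L : MvPolynomial (Fin n) K, L.totalDegree ≤ 1 ∧
      (q ≠ p → eval p L ≠ 0 ∧ eval q L = 0) := fun q => by
    by_cases hq : q = p
    · exact ⟨1, by simp, fun h => absurd hq h⟩
    · obtain ⟨L, hL, hp, hq⟩ := exists_totalDegree_le_one_eval_ne_zero_eval_eq_zero (Ne.symm hq)
      exact ⟨L, hL, fun _ => ⟨hp, hq⟩⟩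
  choose L hLdeg hLsep using hL
  refine ⟨∏ q ∈ S.erase p, L q, ?_, ?_, fun q hq hqp => ?_⟩
  · calc (∏ q ∈ S.erase p, L q).totalDegree ≤ ∑ q ∈ S.erase p, (L q).totalDegree :=
          totalDegree_finsetProd _ _
      _ ≤ ∑ q ∈ S.erase p, 1 := sum_le_sum fun q _ => hLdeg q
      _ = S.card - 1 := by rw [sum_const, smul_eq_mul, mul_one, card_erase_of_mem hp]
  · rw [eval_prod]
    exact prod_ne_zero_iff.2 fun q hq => (hLsep q (ne_of_mem_erase hq)).1
  · rw [eval_prod]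
    exact prod_eq_zero (mem_erase.2 ⟨hqp, hq⟩) (hLsep q hqp).2

lemma linearIndepOn_monomialVec {S : Finset (Fin n → K)} (hS : S.card ≤ s + 1) :
    LinearIndepOn K (monomialVec s) (S : Set (Fin n → K)) := by
  rw [LinearIndepOn, Fintype.linearIndependent_iff]
  intro g hg p
  obtain ⟨P, hPdeg, hPp, hPq⟩ := exists_totalDegree_le_eval_ne_zero_eval_eq_zero S p.2
  have hsum := sum_mul_eval_eq_zero_of_sum_smul_monomialVec_eq_zero hg (hPdeg.trans (by omega))
  rw [sum_eq_single p (fun q _ hq => by rw [hPq q q.2 (Subtype.coe_ne_coe.2 hq), mul_zero])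
    (fun h => absurd (mem_univ p) h)] at hsum
  exact (mul_eq_zero.1 hsum).resolve_right hPp

end Field

section Moments

variable {ι : Type*} [Fintype ι] {n s : ℕ}

open scoped Classical in
/-- The support of the atomic measure `∑ i, c i • δ_{u i}`. -/
noncomputable def atomicSupport (c : ι → ℝ) (u : ι → Fin n → ℝ) : Finset (Fin n → ℝ) :=
  (univ.filter (c · ≠ 0)).image u

lemma card_atomicSupport_le (c : ι → ℝ) (u : ι → Fin n → ℝ) :
    (atomicSupport c u).card ≤ Fintype.card ι :=
  card_image_le.trans (card_filter_le _ _)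

lemma momMat_eq_transpose_mul_self {c : ι → ℝ} {u : ι → Fin n → ℝ} {ω : (Fin n →₀ ℕ) → ℝ}
    (hc : ∀ i, 0 ≤ c i)
    (hω : ∀ α : Fin n →₀ ℕ, α.degree ≤ 2 * s → ω α = ∑ i, c i * ∏ j, u i j ^ α j) :
    momMat n s ω = (Matrix.of fun i => √(c i) • monomialVec s (u i))ᵀ *
      Matrix.of fun i => √(c i) • monomialVec s (u i) := by
  ext a b
  have hab : (a.1 + b.1).degree ≤ 2 * s := by
    rw [map_add, two_mul]
    exact add_le_add (mem_degLE.1 a.2) (mem_degLE.1 b.2)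
  rw [momMat, Matrix.of_apply, hω _ hab, Matrix.mul_apply]
  refine sum_congr rfl fun i _ => ?_
  simp only [Matrix.transpose_apply, Matrix.of_apply, Pi.smul_apply, smul_eq_mul, monomialVec,
    Finsupp.add_apply, pow_add, prod_mul_distrib]
  linear_combination -((∏ j, u i j ^ a.1 j) * ∏ j, u i j ^ b.1 j) * Real.mul_self_sqrt (hc i)

lemma rank_momMat_eq_card_atomicSupport {c : ι → ℝ} {u : ι → Fin n → ℝ}
    {ω : (Fin n →₀ ℕ) → ℝ} (hc : ∀ i, 0 ≤ c i)
    (hω : ∀ α : Fin n →₀ ℕ, α.degree ≤ 2 * s → ω α = ∑ i, c i * ∏ j, u i j ^ α j)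
    (hcard : (atomicSupport c u).card ≤ s + 1) :
    (momMat n s ω).rank = (atomicSupport c u).card := by
  have hsupp : ((atomicSupport c u : Finset _) : Set (Fin n → ℝ)) = u '' {i | √(c i) ≠ 0} := by
    simp [atomicSupport, Real.sqrt_ne_zero (hc _)]
  rw [momMat_eq_transpose_mul_self hc hω, Matrix.rank_transpose_mul_self,
    Matrix.rank_eq_finrank_span_row]
  change Module.finrank ℝ (Submodule.span ℝ (Set.range fun i => √(c i) • monomialVec s (u i))) = _
  rw [span_range_smul_eq_span_image, ← Set.image_image (monomialVec s) u, ← hsupp,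
    Set.image_eq_range, finrank_span_eq_card (linearIndepOn_monomialVec hcard)]
  exact Fintype.card_coe _

end Moments

/-- If `ω ∈ ℝ^{ℕ^n_{2t}}` admits a finitely atomic representing
measure with at most `N` atoms, `d_K ≥ 1`, and `t ≥ N·d_K`, then `ω` is flat:
`rank M_{t-d_K}(ω) = rank M_t(ω)`. -/
theorem flat_of_finitely_atomic
    (n t N dK : ℕ) (hdK : 1 ≤ dK) (ht : N * dK ≤ t)
    (ω : (Fin n →₀ ℕ) → ℝ)
    (hrep : ∃ (c : Fin N → ℝ) (u : Fin N → (Fin n → ℝ)),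
      (∀ i, 0 ≤ c i) ∧
      ∀ α : Fin n →₀ ℕ, (α.sum fun _ e => e) ≤ 2 * t →
        ω α = ∑ i, c i * ∏ j, u i j ^ α j) :
    (momMat n (t - dK) ω).rank = (momMat n t ω).rank := by
  obtain ⟨c, u, hc, hω⟩ := hrep
  have hrank : ∀ s ≤ t, N ≤ s + 1 → (momMat n s ω).rank = (atomicSupport c u).card :=
    fun s hst hNs => rank_momMat_eq_card_atomicSupport hc
      (fun α hα => hω α (hα.trans (by omega)))
      ((card_atomicSupport_le c u).trans (by simpa using hNs))
  have hN : N ≤ t - dK + 1 := by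
    rcases N.eq_zero_or_pos with rfl | hN
    · omega
    · have : N + dK ≤ N * dK + 1 := by nlinarith
      omega
  rw [hrank _ (t.sub_le dK) hN, hrank t le_rfl (by omega)]
end

section
/- A real form f of even degree m in n variables is a sum of m-th powers of real linear forms, f = L_1^m + ··· + L_r^m, if and only if the H-truncated multisequence f̌ defined by f = Σ_{|α|=m} binom(m,α) f̌_α x^α admits a representing measure supported in the half-sphere S^{n−1}_+ = {x ∈ ℝ^n : ‖x‖ = 1, x_1 + ··· + x_n ≥ 0}. -/
/-!
Expanding `(∑ j, L i j * x j) ^ m` by the multinomial theorem shows that `f = ∑ i, L i ^ m`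
exactly when `f̌ α = ∑ i, (L i) ^ α` for `|α| = m`, i.e. when `f̌` is represented by unit atoms
at the points `L i`. Since `m` is even, an atom at `y = t • u` with `u` in the half-sphere may be
moved to `u` with mass `t ^ m`.

Conversely, a representing measure `μ` on the half-sphere is finite, because there
`1 = (∑ j, x j ^ 2) ^ (m / 2)` is a combination of moments of degree `m`. The moment vector is
then `μ(univ)` times the average of the moment map, which lies in the convex hull of the compact
image of the half-sphere; that hull is compact by Carathéodory's theorem, so the moment vector is
a finite nonnegative combination `∑ i, w i • y i ^ α`, and `w i ^ (1 / m) • y i` are the linear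
forms.
-/

open MeasureTheory

/-- The finite set of exponents `α ∈ ℕ^n` with `|α| = m`. -/
def homExponents (n m : ℕ) : Finset (Fin n → ℕ) :=
  (Fintype.piFinset fun _ : Fin n => Finset.range (m + 1)).filter
    (fun α => ∑ j, α j = m)

open Finset Module

section Monomials

variable {n : ℕ}

lemma homExponents_eq_piAntidiag (n m : ℕ) : homExponents n m = piAntidiag univ m := by
  ext α
  simp only [homExponents, mem_filter, Fintype.mem_piFinset, mem_range, Nat.lt_succ_iff,
    mem_piAntidiag, mem_univ, implies_true, and_true, and_iff_right_iff_imp]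
  rintro rfl j
  exact single_le_sum (fun i _ => Nat.zero_le (α i)) (mem_univ j)

lemma mem_homExponents {m : ℕ} {α : Fin n → ℕ} : α ∈ homExponents n m ↔ ∑ j, α j = m := by
  simp [homExponents_eq_piAntidiag]

lemma sum_mul_pow_eq_sum_homExponents (m : ℕ) (a x : Fin n → ℝ) :
    (∑ j, a j * x j) ^ m = ∑ α ∈ homExponents n m,
      (Nat.multinomial univ α : ℝ) * ((∏ j, a j ^ α j) * ∏ j, x j ^ α j) := by
  simp only [homExponents_eq_piAntidiag, sum_pow_eq_sum_piAntidiag, mul_pow, prod_mul_distrib]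

lemma prod_smul_pow (t : ℝ) (x : Fin n → ℝ) (α : Fin n → ℕ) :
    ∏ j, (t • x) j ^ α j = t ^ (∑ j, α j) * ∏ j, x j ^ α j := by
  simp only [Pi.smul_apply, smul_eq_mul, mul_pow, prod_mul_distrib, prod_pow_eq_pow_sum]

lemma eqOn_of_forall_sum_mul_prod_pow_eq (s : Finset (Fin n → ℕ)) {a b : (Fin n → ℕ) → ℝ}
    (h : ∀ x : Fin n → ℝ, ∑ α ∈ s, a α * ∏ j, x j ^ α j = ∑ α ∈ s, b α * ∏ j, x j ^ α j) :
    Set.EqOn a b s := by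
  classical
  let P : ((Fin n → ℕ) → ℝ) → MvPolynomial (Fin n) ℝ := fun a =>
    ∑ α ∈ s, MvPolynomial.monomial (Finsupp.equivFunOnFinite.symm α) (a α)
  have eval_P (a : (Fin n → ℕ) → ℝ) (x : Fin n → ℝ) :
      MvPolynomial.eval x (P a) = ∑ α ∈ s, a α * ∏ j, x j ^ α j := by
    simp [P, MvPolynomial.eval_monomial, Finsupp.prod_pow]
  have coeff_P (a : (Fin n → ℕ) → ℝ) {α : Fin n → ℕ} (hα : α ∈ s) :
      MvPolynomial.coeff (Finsupp.equivFunOnFinite.symm α) (P a) = a α := by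
    simp [P, MvPolynomial.coeff_sum, MvPolynomial.coeff_monomial, hα]
  intro α hα
  have hP : P a = P b := MvPolynomial.funext fun x => by rw [eval_P, eval_P, h]
  rw [← coeff_P a hα, ← coeff_P b hα, hP]

theorem forall_sum_multinomial_eq_sum_pow_iff {ι : Type*} [Fintype ι] (m : ℕ)
    (c : (Fin n → ℕ) → ℝ) (L : ι → Fin n → ℝ) :
    (∀ x : Fin n → ℝ, ∑ α ∈ homExponents n m,
        (Nat.multinomial univ α : ℝ) * c α * ∏ j, x j ^ α j = ∑ i, (∑ j, L i j * x j) ^ m) ↔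
      Set.EqOn c (fun α => ∑ i, ∏ j, L i j ^ α j) (homExponents n m) := by
  have expand (x : Fin n → ℝ) : ∑ i, (∑ j, L i j * x j) ^ m = ∑ α ∈ homExponents n m,
      (Nat.multinomial univ α : ℝ) * (∑ i, ∏ j, L i j ^ α j) * ∏ j, x j ^ α j := by
    simp only [sum_mul_pow_eq_sum_homExponents, mul_sum, sum_mul]
    rw [sum_comm]
    exact sum_congr rfl fun _ _ => sum_congr rfl fun _ _ => by ring
  simp only [expand]
  refine ⟨fun h α hα => ?_, fun h x => sum_congr rfl fun α hα => by rw [h hα]⟩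
  exact mul_left_cancel₀ (Nat.cast_pos.2 (Nat.multinomial_pos _ _)).ne'
    (eqOn_of_forall_sum_mul_prod_pow_eq _ h hα)

end Monomials

section RepresentingMeasure

variable {n : ℕ}

def halfSphere (n : ℕ) : Set (Fin n → ℝ) :=
  {x | ∑ j, x j ^ 2 = 1 ∧ 0 ≤ ∑ j, x j}

lemma isCompact_halfSphere (n : ℕ) : IsCompact (halfSphere n) := by
  have hclosed : IsClosed (halfSphere n) :=
    (isClosed_eq (by fun_prop) continuous_const).inter
      (isClosed_le continuous_const (continuous_finsetSum _ fun j _ => continuous_apply j))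
  refine Metric.isCompact_of_isClosed_isBounded hclosed
    ((Metric.isBounded_closedBall (x := 0) (r := 1)).subset fun x hx => ?_)
  rw [Metric.mem_closedBall, dist_zero_right, pi_norm_le_iff_of_nonneg zero_le_one]
  intro j
  have hj : x j ^ 2 ≤ 1 := hx.1 ▸ single_le_sum (fun k _ => sq_nonneg (x k)) (mem_univ j)
  rw [Real.norm_eq_abs, abs_le]
  constructor <;> nlinarith

lemma exists_mem_halfSphere_smul_eq {y : Fin n → ℝ} (hy : y ≠ 0) :
    ∃ t : ℝ, ∃ u ∈ halfSphere n, t • u = y := by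
  set s := ∑ j, y j ^ 2
  have hs : 0 < s := by
    obtain ⟨j, hj⟩ := Function.ne_iff.1 hy
    exact (pow_pos (abs_pos.2 hj) 2).trans_le <| by
      simpa only [sq_abs] using single_le_sum (fun k _ => sq_nonneg (y k)) (mem_univ j)
  obtain ⟨t, ht, hty⟩ : ∃ t : ℝ, t ^ 2 = s ∧ 0 ≤ t * ∑ j, y j := by
    rcases le_total 0 (∑ j, y j) with h | h
    · exact ⟨√s, Real.sq_sqrt hs.le, mul_nonneg (Real.sqrt_nonneg s) h⟩
    · exact ⟨-√s, by rw [neg_sq, Real.sq_sqrt hs.le],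
        mul_nonneg_of_nonpos_of_nonpos (neg_nonpos.2 (Real.sqrt_nonneg s)) h⟩
  have ht0 : t ≠ 0 := by rintro rfl; simp at ht; linarith
  refine ⟨t, t⁻¹ • y, ⟨?_, ?_⟩, smul_inv_smul₀ ht0 y⟩
  · simp only [Pi.smul_apply, smul_eq_mul, mul_pow, ← mul_sum, inv_pow, ht]
    exact inv_mul_cancel₀ hs.ne'
  · simp only [Pi.smul_apply, smul_eq_mul, ← mul_sum]
    have : t⁻¹ * ∑ j, y j = (t * ∑ j, y j) / t ^ 2 := by field_simp
    rw [this]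
    positivity

def IsRepresentingMeasure (K : Set (Fin n → ℝ)) (s : Finset (Fin n → ℕ))
    (c : (Fin n → ℕ) → ℝ) (μ : Measure (Fin n → ℝ)) : Prop :=
  μ Kᶜ = 0 ∧ ∀ α ∈ s, Integrable (fun x => ∏ j, x j ^ α j) μ ∧ c α = ∫ x, ∏ j, x j ^ α j ∂μ

namespace IsRepresentingMeasure

variable {K : Set (Fin n → ℝ)} {s : Finset (Fin n → ℕ)} {c : (Fin n → ℕ) → ℝ}
  {μ : Measure (Fin n → ℝ)}

lemma congr {c' : (Fin n → ℕ) → ℝ} (h : IsRepresentingMeasure K s c μ) (hc : Set.EqOn c c' s) :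
    IsRepresentingMeasure K s c' μ :=
  ⟨h.1, fun α hα => ⟨(h.2 α hα).1, hc hα ▸ (h.2 α hα).2⟩⟩

lemma zero : IsRepresentingMeasure K s 0 0 :=
  ⟨rfl, fun _ _ => ⟨integrable_zero_measure, by simp⟩⟩

lemma smul_dirac {t : ℝ} {u : Fin n → ℝ} (ht : 0 ≤ t) (hu : u ∈ K) :
    IsRepresentingMeasure K s (fun α => t * ∏ j, u j ^ α j)
      (ENNReal.ofReal t • Measure.dirac u) := by
  refine ⟨by simp [Measure.dirac_apply, hu], fun α _ => ⟨?_, ?_⟩⟩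
  · exact (integrable_dirac (by simp)).smul_measure ENNReal.ofReal_ne_top
  · rw [integral_smul_measure, integral_dirac, ENNReal.toReal_ofReal ht, smul_eq_mul]

lemma sum {ι : Type*} [Fintype ι] {c : ι → (Fin n → ℕ) → ℝ} {μ : ι → Measure (Fin n → ℝ)}
    (h : ∀ i, IsRepresentingMeasure K s (c i) (μ i)) :
    IsRepresentingMeasure K s (∑ i, c i) (∑ i, μ i) := by
  refine ⟨by simp [Measure.finsetSum_apply, (h _).1], fun α hα => ⟨?_, ?_⟩⟩
  · exact integrable_finsetSum_measure.2 fun i _ => ((h i).2 α hα).1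
  · rw [integral_finsetSum_measure fun i _ => ((h i).2 α hα).1, Finset.sum_apply]
    exact sum_congr rfl fun i _ => ((h i).2 α hα).2

lemma isFiniteMeasure {m : ℕ} (hm : Even m)
    (h : IsRepresentingMeasure (halfSphere n) (homExponents n m) c μ) : IsFiniteMeasure μ := by
  obtain ⟨k, rfl⟩ := hm
  have hexpand (x : Fin n → ℝ) : (∑ j, x j ^ 2) ^ k =
      ∑ β ∈ homExponents n k, (Nat.multinomial univ β : ℝ) * ∏ j, x j ^ (β + β) j := by
    simp only [sq, sum_mul_pow_eq_sum_homExponents, ← prod_mul_distrib, ← pow_add, Pi.add_apply]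
  have hint : Integrable (fun x : Fin n → ℝ => (∑ j, x j ^ 2) ^ k) μ := by
    simp only [hexpand]
    refine integrable_finsetSum _ fun β hβ => (h.2 (β + β) ?_).1.const_mul _
    rw [mem_homExponents, Pi.add_def, sum_add_distrib, mem_homExponents.1 hβ]
  have hone : (fun x : Fin n → ℝ => (∑ j, x j ^ 2) ^ k) =ᵐ[μ] fun _ => 1 := by
    filter_upwards [measure_eq_zero_iff_ae_notMem.1 h.1] with x hx
    rw [Set.notMem_compl_iff.1 hx |>.1, one_pow]
  exact (integrable_const_iff.1 (hint.congr hone)).resolve_left one_ne_zero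

end IsRepresentingMeasure

lemma exists_isRepresentingMeasure_halfSphere_pow {m : ℕ} (hm : Even m) (hm0 : 0 < m)
    (y : Fin n → ℝ) : ∃ μ, IsRepresentingMeasure (halfSphere n) (homExponents n m)
      (fun α => ∏ j, y j ^ α j) μ := by
  by_cases hy : y = 0
  · refine ⟨0, IsRepresentingMeasure.zero.congr fun α hα => ?_⟩
    obtain ⟨j, -, hj⟩ := exists_ne_zero_of_sum_ne_zero ((mem_homExponents.1 hα).trans_ne hm0.ne')
    simp only [hy, Pi.zero_apply]
    exact (prod_eq_zero (mem_univ j) (zero_pow hj)).symm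
  · obtain ⟨t, u, hu, rfl⟩ := exists_mem_halfSphere_smul_eq hy
    refine ⟨_, (IsRepresentingMeasure.smul_dirac (hm.pow_nonneg t) hu).congr fun α hα => ?_⟩
    simp only [prod_smul_pow, mem_homExponents.1 hα]

end RepresentingMeasure

section FinitelyAtomic

variable {E : Type*} [NormedAddCommGroup E] [NormedSpace ℝ E] [FiniteDimensional ℝ E]

-- Carathéodory's theorem, with fewer points padded by zero weights.
lemma convexHull_subset_image_stdSimplex {K : Set E} {x₀ : E} (hx₀ : x₀ ∈ K) :
    convexHull ℝ K ⊆
      (fun p : (Fin (finrank ℝ E + 1) → ℝ) × (Fin (finrank ℝ E + 1) → E) => ∑ i, p.1 i • p.2 i) ''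
        (stdSimplex ℝ _ ×ˢ Set.univ.pi fun _ => K) := by
  intro x hx
  obtain ⟨ι, _, z, w, hzK, hz, hw0, hw1, rfl⟩ := eq_pos_convex_span_of_mem_convexHull hx
  obtain ⟨e⟩ : Nonempty (ι ↪ Fin (finrank ℝ E + 1)) :=
    Function.Embedding.nonempty_of_card_le <| by
      simpa using hz.card_le_finrank_succ.trans (by simpa using Submodule.finrank_le _)
  have hw_off (j) (hj : j ∉ Set.range e) : Function.extend e w 0 j = 0 :=
    Function.extend_apply' _ _ _ (by simpa using hj)
  refine ⟨(Function.extend e w 0, Function.extend e z fun _ => x₀),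
    ⟨⟨fun j => ?_, ?_⟩, fun j _ => ?_⟩, ?_⟩
  · by_cases hj : j ∈ Set.range e
    · obtain ⟨i, rfl⟩ := hj
      simpa [e.injective.extend_apply] using (hw0 i).le
    · simp [hw_off j hj]
  · rw [← hw1]
    exact (Fintype.sum_of_injective e e.injective w _ hw_off fun i =>
      (e.injective.extend_apply _ _ _).symm).symm
  · by_cases hj : j ∈ Set.range e
    · obtain ⟨i, rfl⟩ := hj
      simpa [e.injective.extend_apply] using hzK ⟨i, rfl⟩
    · simpa [Function.extend_apply' _ _ _ (by simpa using hj)] using hx₀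
  · exact (Fintype.sum_of_injective e e.injective _ _ (fun j hj => by simp [hw_off j hj])
      fun i => by simp [e.injective.extend_apply]).symm

theorem IsCompact.convexHull {K : Set E} (hK : IsCompact K) : IsCompact (convexHull ℝ K) := by
  rcases K.eq_empty_or_nonempty with rfl | ⟨x₀, hx₀⟩
  · simp
  have hsimplex : IsCompact (stdSimplex ℝ (Fin (finrank ℝ E + 1)) ×ˢ
      Set.univ.pi fun _ : Fin (finrank ℝ E + 1) => K) :=
    (isCompact_stdSimplex ℝ _).prod (isCompact_univ_pi fun _ => hK)
  refine (Set.Subset.antisymm (convexHull_subset_image_stdSimplex hx₀) ?_).symm ▸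
    hsimplex.image (by fun_prop)
  rintro _ ⟨⟨w, z⟩, ⟨hw, hz⟩, rfl⟩
  exact (convex_convexHull ℝ K).sum_mem (fun i _ => hw.1 i) hw.2
    fun i _ => subset_convexHull ℝ K (hz i (Set.mem_univ i))

theorem exists_integral_eq_sum_smul {X : Type*} [TopologicalSpace X] [MeasurableSpace X]
    {μ : Measure X} [IsFiniteMeasure μ] {K : Set X} (hK : IsCompact K) (hμK : μ Kᶜ = 0)
    {f : X → E} (hf : Continuous f) (hfi : Integrable f μ) :
    ∃ (r : ℕ) (c : Fin r → ℝ) (y : Fin r → X),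
      (∀ i, 0 ≤ c i) ∧ (∀ i, y i ∈ K) ∧ ∫ x, f x ∂μ = ∑ i, c i • f (y i) := by
  rcases eq_zero_or_neZero μ with rfl | _
  · exact ⟨0, finZeroElim, finZeroElim, finZeroElim, finZeroElim, by simp⟩
  have hfK : ∀ᵐ x ∂μ, f x ∈ convexHull ℝ (f '' K) := by
    filter_upwards [measure_eq_zero_iff_ae_notMem.1 hμK] with x hx
    exact subset_convexHull ℝ _ (Set.mem_image_of_mem f (Set.notMem_compl_iff.1 hx))
  obtain ⟨ι, _, w, z, hw0, -, hz, hwz⟩ := mem_convexHull_iff_exists_fintype.1 <|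
    (convex_convexHull ℝ _).average_mem (hK.image hf).convexHull.isClosed hfK hfi
  choose y hyK hyz using hz
  let e := (Fintype.equivFin ι).symm
  refine ⟨Fintype.card ι, fun i => μ.real Set.univ * w (e i), fun i => y (e i),
    fun i => mul_nonneg measureReal_nonneg (hw0 _), fun i => hyK _, ?_⟩
  rw [← measure_smul_average, ← hwz, smul_sum, ← e.sum_comp]
  simp only [hyz, mul_smul]

end FinitelyAtomic

lemma IsRepresentingMeasure.exists_eq_sum_mul_prod_pow {n : ℕ} {K : Set (Fin n → ℝ)}
    {s : Finset (Fin n → ℕ)} {c : (Fin n → ℕ) → ℝ} {μ : Measure (Fin n → ℝ)} [IsFiniteMeasure μ]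
    (hK : IsCompact K) (h : IsRepresentingMeasure K s c μ) :
    ∃ (r : ℕ) (w : Fin r → ℝ) (y : Fin r → Fin n → ℝ), (∀ i, 0 ≤ w i) ∧ (∀ i, y i ∈ K) ∧
      Set.EqOn c (fun α => ∑ i, w i * ∏ j, y i j ^ α j) s := by
  have hint (α : s) : Integrable (fun x => ∏ j, x j ^ (α : Fin n → ℕ) j) μ := (h.2 α α.2).1
  obtain ⟨r, w, y, hw, hy, hwy⟩ := exists_integral_eq_sum_smul
    (f := fun x (α : s) => ∏ j, x j ^ (α : Fin n → ℕ) j) hK h.1 (by fun_prop)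
    (Integrable.of_eval hint)
  refine ⟨r, w, y, hw, hy, fun α hα => ?_⟩
  have := congrFun hwy ⟨α, hα⟩
  rw [eval_integral hint] at this
  simpa [(h.2 α hα).2] using this

/-- A real form `f` of even degree `m`, written as
`f = ∑_{|α|=m} binom(m,α) f̌_α x^α`, is a sum of `m`-th powers of real linear
forms iff the `H`-tms `f̌` admits a representing measure supported in the
half-sphere `S^{n-1}_+ = {‖x‖ = 1, x_1 + ⋯ + x_n ≥ 0}`. -/
theorem soep_iff_halfSphere_measure
    (n m : ℕ) (hm : Even m) (hm0 : 0 < m) (fc : (Fin n → ℕ) → ℝ) :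
    (∃ (r : ℕ) (L : Fin r → (Fin n → ℝ)), ∀ x : Fin n → ℝ,
      ∑ α ∈ homExponents n m,
          (Nat.multinomial Finset.univ α : ℝ) * fc α * ∏ j, x j ^ α j
        = ∑ i, (∑ j, L i j * x j) ^ m) ↔
    (∃ μ : Measure (Fin n → ℝ),
      μ {x : Fin n → ℝ | ∑ j, (x j) ^ 2 = 1 ∧ 0 ≤ ∑ j, x j}ᶜ = 0 ∧
      ∀ α ∈ homExponents n m,
        Integrable (fun x => ∏ j, x j ^ α j) μ ∧
          fc α = ∫ x, ∏ j, x j ^ α j ∂μ) := by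
  change _ ↔ ∃ μ, IsRepresentingMeasure (halfSphere n) (homExponents n m) fc μ
  constructor
  · rintro ⟨r, L, hL⟩
    rw [forall_sum_multinomial_eq_sum_pow_iff] at hL
    choose μ hμ using fun i => exists_isRepresentingMeasure_halfSphere_pow hm hm0 (L i)
    exact ⟨∑ i, μ i, (IsRepresentingMeasure.sum hμ).congr fun α hα => by
      rw [Finset.sum_apply, hL hα]⟩
  · rintro ⟨μ, hμ⟩
    have := hμ.isFiniteMeasure hm
    obtain ⟨r, w, y, hw, -, hfc⟩ := hμ.exists_eq_sum_mul_prod_pow (isCompact_halfSphere n)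
    refine ⟨r, fun i => w i ^ (m : ℝ)⁻¹ • y i,
      (forall_sum_multinomial_eq_sum_pow_iff m fc _).2 fun α hα => ?_⟩
    simp only [hfc hα, prod_smul_pow, mem_homExponents.1 hα,
      Real.rpow_inv_natCast_pow (hw _) hm0.ne']
end
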